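/- arXiv:1203.0442 — 2 statements merged into one kernel-verified Lean document; each statement's English description precedes it below -/
import Mathlib

section
/- Let f = (1+u²)X − (1 − u² − 2su) and g = (1+u²)Y − (2u + s(1−u²)) be polynomials in the single variable u with coefficients in ℚ[s,X,Y]. Then there exists a nonzero rational constant c such that the resultant Res_u(f, g) equals c·(s² + 1)·(X² + Y² − s² − 1) in ℚ[s,X,Y]. In particular, the content of Res_u(f,g) with respect to the variables X, Y is (up to a nonzero rational constant) s² + 1, and its primitive part is (up to sign) X² + Y² − s² − 1. -/
open Polynomial

/-- The Sylvester matrix of `f` and `g`, of assumed degrees `m` and `n` respectively: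
an `(n+m) × (n+m)` matrix whose first `n` columns carry the shifted coefficients of `f`
and whose last `m` columns carry the shifted coefficients of `g`. -/
noncomputable def sylvester {R : Type*} [CommRing R] (f g : R[X]) (m n : ℕ) :
    Matrix (Fin (n + m)) (Fin (n + m)) R :=
  Matrix.of fun i j =>
    Fin.addCases
      (fun j₁ : Fin n =>
        if (j₁ : ℕ) ≤ (i : ℕ) ∧ (i : ℕ) ≤ (j₁ : ℕ) + m then f.coeff ((i : ℕ) - (j₁ : ℕ)) else 0)
      (fun j₂ : Fin m =>
        if (j₂ : ℕ) ≤ (i : ℕ) ∧ (i : ℕ) ≤ (j₂ : ℕ) + n then g.coeff ((i : ℕ) - (j₂ : ℕ)) else 0)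
      j

/-- The resultant of two polynomials `f, g ∈ R[X]` with respect to `X`: the determinant
of their Sylvester matrix. -/
noncomputable def resultant {R : Type*} [CommRing R] (f g : R[X]) : R :=
  (_root_.sylvester f g f.natDegree g.natDegree).det


lemma quad_coeff0 {R : Type*} [CommRing R] (a b c : R) :
    (C a * Polynomial.X ^ 2 + C b * Polynomial.X + C c).coeff 0 = c := by
  simp [coeff_add, coeff_C_mul, coeff_X_pow, coeff_C, coeff_X]

lemma quad_coeff1 {R : Type*} [CommRing R] (a b c : R) :
    (C a * Polynomial.X ^ 2 + C b * Polynomial.X + C c).coeff 1 = b := by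
  simp [coeff_add, coeff_C_mul, coeff_X_pow, coeff_C, coeff_X]

lemma quad_coeff2 {R : Type*} [CommRing R] (a b c : R) :
    (C a * Polynomial.X ^ 2 + C b * Polynomial.X + C c).coeff 2 = a := by
  simp [coeff_add, coeff_C_mul, coeff_X_pow, coeff_C, coeff_X]

lemma quad_coeff3 {R : Type*} [CommRing R] (a b c : R) :
    (C a * Polynomial.X ^ 2 + C b * Polynomial.X + C c).coeff 3 = 0 := by
  simp [coeff_add, coeff_C_mul, coeff_X_pow, coeff_C, coeff_X]

lemma sylvester_quad {R : Type*} [CommRing R] (a b c a' b' c' : R) :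
    _root_.sylvester (C a * Polynomial.X ^ 2 + C b * Polynomial.X + C c)
      (C a' * Polynomial.X ^ 2 + C b' * Polynomial.X + C c') 2 2 =
      !![c, 0, c', 0;
         b, c, b', c';
         a, b, a', b';
         0, a, 0, a'] := by
  ext i j
  fin_cases i <;> fin_cases j <;>
    simp [_root_.sylvester, Fin.addCases, quad_coeff0, quad_coeff1, quad_coeff2, quad_coeff3,
      Fin.subNat, Fin.castLT, show ((3 : Fin (2+2)) : ℕ) = 3 from rfl, coeff_X, coeff_C]


/-- The variable `s` of `ℚ[s,X,Y] = MvPolynomial (Fin 3) ℚ` (index `0`). -/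
noncomputable def s : MvPolynomial (Fin 3) ℚ := MvPolynomial.X 0
/-- The variable `X` of `ℚ[s,X,Y]` (index `1`). -/
noncomputable def Xv : MvPolynomial (Fin 3) ℚ := MvPolynomial.X 1
/-- The variable `Y` of `ℚ[s,X,Y]` (index `2`). -/
noncomputable def Yv : MvPolynomial (Fin 3) ℚ := MvPolynomial.X 2

/-- let `f = (1+u²)·X - (1 - u² - 2su)` and
`g = (1+u²)·Y - (2u + s(1-u²))` be polynomials in the single variable `u` with
coefficients in `ℚ[s,X,Y]`.  Then there is a nonzero rational constant `c` such that
`Res_u(f,g) = c·(s²+1)·(X² + Y² - s² - 1)` in `ℚ[s,X,Y]`; in particular the content of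
`Res_u(f,g)` with respect to `X, Y` is `s² + 1` up to a nonzero rational constant, and
its primitive part is `X² + Y² - s² - 1` up to sign. -/
theorem resultant_of_ruled_surface_example :
    ∃ c : ℚ, c ≠ 0 ∧
      _root_.resultant
        ((1 + Polynomial.X ^ 2) * Polynomial.C Xv -
          (1 - Polynomial.X ^ 2 - Polynomial.C (2 * s) * Polynomial.X))
        ((1 + Polynomial.X ^ 2) * Polynomial.C Yv -
          (2 * Polynomial.X + Polynomial.C s * (1 - Polynomial.X ^ 2))) =
      MvPolynomial.C c * ((s ^ 2 + 1) * (Xv ^ 2 + Yv ^ 2 - s ^ 2 - 1)) := by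
  refine ⟨4, by norm_num, ?_⟩
  have hXv : Xv + 1 ≠ 0 := by
    intro h
    have := congrArg (MvPolynomial.eval (fun _ => (0:ℚ))) h
    simp [Xv] at this
  have hYv : Yv + s ≠ 0 := by
    intro h
    have := congrArg (MvPolynomial.eval (fun i => if i = 2 then (1:ℚ) else 0)) h
    simp [Yv, s] at this
  have hf : ((1 + Polynomial.X ^ 2) * Polynomial.C Xv -
      (1 - Polynomial.X ^ 2 - Polynomial.C (2 * s) * Polynomial.X)) =
      C (Xv + 1) * Polynomial.X ^ 2 + C (2 * s) * Polynomial.X + C (Xv - 1) := by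
    simp only [map_add, map_sub, map_mul, map_one]
    ring
  have hg : ((1 + Polynomial.X ^ 2) * Polynomial.C Yv -
      (2 * Polynomial.X + Polynomial.C s * (1 - Polynomial.X ^ 2))) =
      C (Yv + s) * Polynomial.X ^ 2 + C (-2) * Polynomial.X + C (Yv - s) := by
    simp only [map_add, map_sub, map_mul, map_one, map_neg, map_ofNat]
    ring
  rw [hf, hg, _root_.resultant]
  rw [natDegree_quadratic hXv, natDegree_quadratic hYv]
  rw [sylvester_quad]
  rw [show (MvPolynomial.C (4:ℚ) : MvPolynomial (Fin 3) ℚ) = 4 by simp [map_ofNat]]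
  simp [Matrix.det_succ_row_zero, Fin.sum_univ_succ,
    show Fin.succAbove (2 : Fin 4) (2 : Fin 3) = 3 from rfl]
  ring
end

section
/- Let G(v,t) = 2v + t⁴ + t³ + (1/2)t²v − 2t² − (1/2)tv − (1/16)v² − t⁶ + t. Then the plane curve G = 0 has no real singular points: there is no (v,t) ∈ ℝ² such that G(v,t) = 0, ∂G/∂v(v,t) = 0 and ∂G/∂t(v,t) = 0 simultaneously. -/
/-- The plane curve `G(v,t) = 0` obtained by substituting the parametrization
`S₂(v,t) = (v, (t-1)t - v/4, (t+1)(t-1)t)` into the elliptic paraboloid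
`2x - y² - z² - z = 0`. -/
noncomputable def G (v t : ℝ) : ℝ :=
  2 * v + t ^ 4 + t ^ 3 + (1 / 2) * t ^ 2 * v - 2 * t ^ 2 - (1 / 2) * t * v -
    (1 / 16) * v ^ 2 - t ^ 6 + t

lemma derivV (v t : ℝ) :
    deriv (fun v' => G v' t) v = 2 + (1/2) * t ^ 2 - (1/2) * t - (1/8) * v := by
  have hfun : (fun v' => G v' t)
      = fun v' : ℝ => (-(1/16)) * v' ^ 2 + (2 + (1/2) * t ^ 2 - (1/2) * t) * v'
        + (t ^ 4 + t ^ 3 - 2 * t ^ 2 - t ^ 6 + t) := by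
    funext v'; unfold G; ring
  rw [hfun]
  have h : HasDerivAt (fun v' : ℝ => (-(1/16)) * v' ^ 2
      + (2 + (1/2) * t ^ 2 - (1/2) * t) * v'
      + (t ^ 4 + t ^ 3 - 2 * t ^ 2 - t ^ 6 + t))
      ((-(1/16)) * (2 * v ^ 1) + (2 + (1/2) * t ^ 2 - (1/2) * t) * 1) v := by
    exact (((hasDerivAt_pow 2 v).const_mul _).add
      ((hasDerivAt_id v).const_mul _)).add_const _
  rw [h.deriv]; ring

lemma derivT (v t : ℝ) :
    deriv (fun t' => G v t') t
      = -(6 * t ^ 5) + 4 * t ^ 3 + 3 * t ^ 2 + ((1/2) * v - 2) * (2 * t)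
        + (1 - (1/2) * v) := by
  have hfun : (fun t' => G v t')
      = fun t' : ℝ => -(t' ^ 6) + t' ^ 4 + t' ^ 3 + ((1/2) * v - 2) * t' ^ 2
        + (1 - (1/2) * v) * t' + (2 * v - (1/16) * v ^ 2) := by
    funext t'; unfold G; ring
  rw [hfun]
  have h : HasDerivAt (fun t' : ℝ => -(t' ^ 6) + t' ^ 4 + t' ^ 3
      + ((1/2) * v - 2) * t' ^ 2 + (1 - (1/2) * v) * t'
      + (2 * v - (1/16) * v ^ 2))
      (-((6 : ℕ) * t ^ 5) + (4 : ℕ) * t ^ 3 + (3 : ℕ) * t ^ 2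
        + ((1/2) * v - 2) * ((2 : ℕ) * t ^ 1) + (1 - (1/2) * v) * 1) t := by
    exact (((((hasDerivAt_pow 6 t).neg.add (hasDerivAt_pow 4 t)).add
      (hasDerivAt_pow 3 t)).add ((hasDerivAt_pow 2 t).const_mul _)).add
      ((hasDerivAt_id t).const_mul _)).add_const _
  rw [h.deriv]; push_cast; ring

/-- the plane curve `G = 0` has no real singular points: there is no
`(v,t) ∈ ℝ²` where `G`, `∂G/∂v` and `∂G/∂t` vanish simultaneously. -/
theorem G_no_singular_points :
    ¬ ∃ v t : ℝ, G v t = 0 ∧ deriv (fun v' => G v' t) v = 0 ∧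
      deriv (fun t' => G v t') t = 0 := by
  rintro ⟨v, t, hG, hv, ht⟩
  rw [derivV] at hv
  rw [derivT] at ht
  unfold G at hG
  have hveq : v = 16 + 4 * t ^ 2 - 4 * t := by linarith
  subst hveq
  have : (1 : ℝ) = 0 := by
    linear_combination
      ((-27025059/24507158929 : ℝ) * t ^ 4 + (-170273646/24507158929) * t ^ 3
        + (-216455285/24507158929) * t ^ 2 + (1150620345/49014317858) * t
        + (1512044517/24507158929)) * hG
      + ((9008353/49014317858 : ℝ) * t ^ 5 + (28378941/24507158929) * t ^ 4
        + (66146193/49014317858) * t ^ 3 + (-225104469/49014317858) * t ^ 2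
        + (-286891739/24507158929) * t + (-44920951/24507158929)) * ht
  exact one_ne_zero this
end
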